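/- arXiv:1607.07357 — 2 statements merged into one kernel-verified Lean document; each statement's English description precedes it below -/
import Mathlib

section
/- Let g ∈ SL(4,ℂ) be block-diagonal with 2×2 block (c_{↑↑}, c_{↑↓}; c_{↓↑}, c_{↓↓}) on the span of {↑,↓} and diagonal entries c₀₀ on |0⟩ and c_◇◇ on |◇⟩. For a vector v ∈ ℂ⁴⊗ℂ⁴ with coefficients m_{ij} (i,j ∈ {↑,↓,0,◇}), the polynomial I₀(v) = (m_{↑↑}m_{↓↓} − m_{↑↓}m_{↓↑})·m_{0◇}·m_{◇0} is invariant under the action of g⊗h for any two such block-diagonal matrices g, h in SL(4,ℂ). -/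
open scoped BigOperators

/-- Basis ordering: 0 = ↑, 1 = ↓, 2 = |0⟩, 3 = |◇⟩. Block-diagonal form:
2×2 block on {↑,↓}, scalars on |0⟩ and |◇⟩. -/
def IsBlockDiag (g : Matrix (Fin 4) (Fin 4) ℂ) : Prop :=
  g 0 2 = 0 ∧ g 0 3 = 0 ∧ g 1 2 = 0 ∧ g 1 3 = 0 ∧
  g 2 0 = 0 ∧ g 2 1 = 0 ∧ g 3 0 = 0 ∧ g 3 1 = 0 ∧
  g 2 3 = 0 ∧ g 3 2 = 0

/-- I₀ = (m_{↑↑}m_{↓↓} − m_{↑↓}m_{↓↑})·m_{0◇}·m_{◇0}. -/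
def I₀ (m : Fin 4 → Fin 4 → ℂ) : ℂ :=
  (m 0 0 * m 1 1 - m 0 1 * m 1 0) * m 2 3 * m 3 2

/-!
Writing `m` as a matrix `M`, the action of `g ⊗ h` is `M ↦ g * M * hᵀ`. For block-diagonal `g`
and `h` the upper-left `2 × 2` block of `M` is transformed by the `2 × 2` blocks of `g` and `h`, so
its determinant picks up the product of their determinants, while `m_{0◇}` and `m_{◇0}` are scaled
by `g₀₀ h_◇◇` and `g_◇◇ h₀₀`. Altogether `I₀` is multiplied by `det g * det h`.
-/

namespace IsBlockDiag

variable {g h : Matrix (Fin 4) (Fin 4) ℂ}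

theorem det_eq (hg : IsBlockDiag g) :
    g.det = (g 0 0 * g 1 1 - g 0 1 * g 1 0) * g 2 2 * g 3 3 := by
  obtain ⟨g02, g03, g12, g13, g20, g21, g30, g31, g23, g32⟩ := hg
  rw [Matrix.det_succ_row_zero, Fin.sum_univ_four]
  simp [Matrix.det_fin_three, Fin.succAbove, Fin.lt_def, g02, g03, g12, g13, g20, g21, g30, g31,
    g23, g32]
  ring

theorem I₀_tensor_action (hg : IsBlockDiag g) (hh : IsBlockDiag h) (m : Fin 4 → Fin 4 → ℂ) :
    I₀ (fun i j => ∑ k : Fin 4, ∑ l : Fin 4, g i k * h j l * m k l) = g.det * h.det * I₀ m := by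
  rw [hg.det_eq, hh.det_eq]
  obtain ⟨g02, g03, g12, g13, g20, g21, g30, g31, g23, g32⟩ := hg
  obtain ⟨h02, h03, h12, h13, h20, h21, h30, h31, h23, h32⟩ := hh
  simp only [I₀, Fin.sum_univ_four, g02, g03, g12, g13, g20, g21, g30, g31, g23, g32,
    h02, h03, h12, h13, h20, h21, h30, h31, h23, h32, mul_zero, zero_mul, add_zero, zero_add]
  ring

end IsBlockDiag

/-- I₀ is invariant under g⊗h for block-diagonal determinant-one g, h. -/
theorem I₀_invariant (g h : Matrix (Fin 4) (Fin 4) ℂ)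
    (hg : IsBlockDiag g) (hh : IsBlockDiag h)
    (hgdet : g.det = 1) (hhdet : h.det = 1)
    (m : Fin 4 → Fin 4 → ℂ) :
    I₀ (fun i j => ∑ k : Fin 4, ∑ l : Fin 4, g i k * h j l * m k l) = I₀ m := by
  rw [hg.I₀_tensor_action hh, hgdet, hhdet, one_mul, one_mul]
end

section
/- The polynomial I₁ = (m_{↑↑0}m_{↓↓0} − m_{↑↓0}m_{↓↑0})·(m_{0↑↑}m_{0↓↓} − m_{0↑↓}m_{0↓↑})·(m_{↑0↑}m_{↓0↓} − m_{↑0↓}m_{↓0↑}) in the coefficients of a three-mode, two-fermion state (with no double occupancy, basis labels {↑,↓,0} per mode) is invariant under g⊗h⊗k for any block-diagonal matrices g,h,k ∈ SL(3,ℂ) of the form (2×2 block on span{↑,↓}) ⊕ (scalar on |0⟩) with determinant 1. -/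
/-- Block-diagonal 3×3 form: 2×2 block on span{↑,↓} (indices 0,1) ⊕ scalar on |0⟩ (index 2). -/
def IsBlockDiag3 (g : Matrix (Fin 3) (Fin 3) ℂ) : Prop :=
  g 0 2 = 0 ∧ g 1 2 = 0 ∧ g 2 0 = 0 ∧ g 2 1 = 0

/-- I₁ = (m_{↑↑0}m_{↓↓0} − m_{↑↓0}m_{↓↑0})·(m_{0↑↑}m_{0↓↓} − m_{0↑↓}m_{0↓↑})
·(m_{↑0↑}m_{↓0↓} − m_{↑0↓}m_{↓0↑}), with labels 0=↑,1=↓,2=|0⟩. -/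
def I₁ (m : Fin 3 → Fin 3 → Fin 3 → ℂ) : ℂ :=
  (m 0 0 2 * m 1 1 2 - m 0 1 2 * m 1 0 2) *
  (m 2 0 0 * m 2 1 1 - m 2 0 1 * m 2 1 0) *
  (m 0 2 0 * m 1 2 1 - m 0 2 1 * m 1 2 0)

/-!
Each factor of `I₁` is the determinant of a `2 × 2` slice of `m` in which one mode is fixed to `|0⟩`.
Under `g ⊗ h ⊗ k` such a slice becomes `s • A * M * Bᵀ`, where `A`, `B` are the spin blocks of the
other two factors and `s` is the `|0⟩`-entry of the fixed one, so its determinant picks up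
`s ^ 2 * det A * det B`. In the product of the three slices every factor `g` therefore contributes
`(det A_g * s_g) ^ 2 = (det g) ^ 2 = 1`.
-/

open Matrix

abbrev upperBlock (X : Matrix (Fin 3) (Fin 3) ℂ) : Matrix (Fin 2) (Fin 2) ℂ :=
  X.submatrix Fin.castSucc Fin.castSucc

def tensorAct (g h k : Matrix (Fin 3) (Fin 3) ℂ) (m : Fin 3 → Fin 3 → Fin 3 → ℂ) :
    Fin 3 → Fin 3 → Fin 3 → ℂ :=
  fun i j l => ∑ a : Fin 3, ∑ b : Fin 3, ∑ c : Fin 3, g i a * h j b * k l c * m a b c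

theorem upperBlock_smul (c : ℂ) (X : Matrix (Fin 3) (Fin 3) ℂ) :
    upperBlock (c • X) = c • upperBlock X :=
  rfl

theorem upperBlock_transpose (X : Matrix (Fin 3) (Fin 3) ℂ) :
    upperBlock Xᵀ = (upperBlock X)ᵀ :=
  rfl

section BlockDiag

variable {g : Matrix (Fin 3) (Fin 3) ℂ}

theorem IsBlockDiag3.transpose (hg : IsBlockDiag3 g) : IsBlockDiag3 gᵀ :=
  ⟨hg.2.2.1, hg.2.2.2, hg.1, hg.2.1⟩

theorem IsBlockDiag3.det_eq (hg : IsBlockDiag3 g) : g.det = (upperBlock g).det * g 2 2 := by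
  obtain ⟨h02, h12, h20, h21⟩ := hg
  simp only [det_fin_three, det_fin_two, submatrix_apply, Fin.castSucc_zero, Fin.castSucc_one,
    h02, h12, h20, h21, mul_zero, zero_mul, sub_zero, add_zero]
  ring

theorem upperBlock_mul_of_isBlockDiag_left (hg : IsBlockDiag3 g) (X : Matrix (Fin 3) (Fin 3) ℂ) :
    upperBlock (g * X) = upperBlock g * upperBlock X := by
  obtain ⟨h02, h12, -, -⟩ := hg
  ext i j
  fin_cases i <;> simp [mul_apply, Fin.sum_univ_three, Fin.sum_univ_two, h02, h12]

theorem upperBlock_mul_of_isBlockDiag_right (hg : IsBlockDiag3 g) (X : Matrix (Fin 3) (Fin 3) ℂ) :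
    upperBlock (X * g) = upperBlock X * upperBlock g := by
  obtain ⟨-, -, h20, h21⟩ := hg
  ext i j
  fin_cases j <;> simp [mul_apply, Fin.sum_univ_three, Fin.sum_univ_two, h20, h21]

end BlockDiag

theorem det_upperBlock_smul_mul_mul_transpose {g h : Matrix (Fin 3) (Fin 3) ℂ}
    (hg : IsBlockDiag3 g) (hh : IsBlockDiag3 h) (c : ℂ) (X : Matrix (Fin 3) (Fin 3) ℂ) :
    (upperBlock (c • (g * X * hᵀ))).det =
      c ^ 2 * (upperBlock g).det * (upperBlock X).det * (upperBlock h).det := by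
  rw [upperBlock_smul, det_smul, upperBlock_mul_of_isBlockDiag_right hh.transpose,
    upperBlock_mul_of_isBlockDiag_left hg, det_mul, det_mul, upperBlock_transpose, det_transpose,
    Fintype.card_fin]
  ring

theorem I₁_eq_mul_det_upperBlock (m : Fin 3 → Fin 3 → Fin 3 → ℂ) :
    I₁ m = (upperBlock (of fun i j => m i j 2)).det * (upperBlock (of fun i j => m 2 i j)).det *
      (upperBlock (of fun i j => m i 2 j)).det := by
  simp [I₁, det_fin_two]

section Slices

variable {g h k : Matrix (Fin 3) (Fin 3) ℂ} (m : Fin 3 → Fin 3 → Fin 3 → ℂ)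

theorem tensorAct_slice_right (hk : IsBlockDiag3 k) :
    of (fun i j => tensorAct g h k m i j 2) = k 2 2 • (g * of (fun a b => m a b 2) * hᵀ) := by
  obtain ⟨-, -, h20, h21⟩ := hk
  ext i j
  simp only [tensorAct, of_apply, Matrix.smul_apply, mul_apply, transpose_apply, smul_eq_mul,
    Fin.sum_univ_three, h20, h21, mul_zero, zero_mul, add_zero, zero_add]
  ring

theorem tensorAct_slice_left (hg : IsBlockDiag3 g) :
    of (fun i j => tensorAct g h k m 2 i j) = g 2 2 • (h * of (fun b c => m 2 b c) * kᵀ) := by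
  obtain ⟨-, -, h20, h21⟩ := hg
  ext i j
  simp only [tensorAct, of_apply, Matrix.smul_apply, mul_apply, transpose_apply, smul_eq_mul,
    Fin.sum_univ_three, h20, h21, zero_mul, add_zero, zero_add]
  ring

theorem tensorAct_slice_middle (hh : IsBlockDiag3 h) :
    of (fun i j => tensorAct g h k m i 2 j) = h 2 2 • (g * of (fun a c => m a 2 c) * kᵀ) := by
  obtain ⟨-, -, h20, h21⟩ := hh
  ext i j
  simp only [tensorAct, of_apply, Matrix.smul_apply, mul_apply, transpose_apply, smul_eq_mul,
    Fin.sum_univ_three, h20, h21, mul_zero, zero_mul, add_zero, zero_add]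
  ring

end Slices

/-- I₁ is invariant under g⊗h⊗k for block-diagonal determinant-one g, h, k ∈ SL(3,ℂ). -/
theorem I₁_invariant (g h k : Matrix (Fin 3) (Fin 3) ℂ)
    (hg : IsBlockDiag3 g) (hh : IsBlockDiag3 h) (hk : IsBlockDiag3 k)
    (hgdet : g.det = 1) (hhdet : h.det = 1) (hkdet : k.det = 1)
    (m : Fin 3 → Fin 3 → Fin 3 → ℂ) :
    I₁ (fun i j l => ∑ a : Fin 3, ∑ b : Fin 3, ∑ c : Fin 3,
        g i a * h j b * k l c * m a b c) = I₁ m := by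
  change I₁ (tensorAct g h k m) = I₁ m
  rw [hg.det_eq] at hgdet
  rw [hh.det_eq] at hhdet
  rw [hk.det_eq] at hkdet
  rw [I₁_eq_mul_det_upperBlock, tensorAct_slice_right m hk,
    tensorAct_slice_left m hg, tensorAct_slice_middle m hh,
    det_upperBlock_smul_mul_mul_transpose hg hh, det_upperBlock_smul_mul_mul_transpose hh hk,
    det_upperBlock_smul_mul_mul_transpose hg hk]
  calc _ = ((upperBlock g).det * g 2 2) ^ 2 * ((upperBlock h).det * h 2 2) ^ 2 *
        ((upperBlock k).det * k 2 2) ^ 2 * I₁ m := by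
        rw [I₁_eq_mul_det_upperBlock]; ring
    _ = _ := by rw [hgdet, hhdet, hkdet]; ring
end
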